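/- arXiv:2504.09913 — 2 statements merged into one kernel-verified Lean document; each statement's English description precedes it below -/
import Mathlib

section
/- Consider a finite MDP admitting a solution (g⋆, h⋆) of the modified Bellman equations in which g⋆ is a constant vector c·1 for some c ∈ ℝ (as holds for every weakly communicating MDP). Let f : ℝ^S → ℝ be continuous with f(x + c·1) = f(x) + c for all x ∈ ℝ^S and c ∈ ℝ. Run Anc-RVI with λ_k = 2/(k+2): h^k = λ_k h^0 + (1−λ_k)(T h^{k−1} − f(h^{k−1})·1), started from h^0 ∈ ℝ^S, with π_k a greedy policy for h^k. Then for every k ≥ 1, ‖g⋆ − g^{π_k}‖_∞ ≤ ‖T h^k − h^k − g⋆‖_∞ ≤ (8/(k+1))‖h^0 − h⋆‖_∞. Furthermore, if any two vectors h, h' ∈ ℝ^S for which (g⋆, h) and (g⋆, h') are solutions of the modified Bellman equations differ by a constant vector (as holds for every unichain MDP), then h^k converges to some h^∞ with (g⋆, h^∞) a solution of the modified Bellman equations, and f(h^k)·1 converges to g⋆. -/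
open Finset Filter

noncomputable section

/-- A finite Markov decision process: a transition kernel `P` assigning to each
state-action pair a probability distribution over states, and a reward `r`. -/
structure FinMDP (S A : Type) [Fintype S] [Fintype A] where
  P : S → A → S → ℝ
  r : S → A → ℝ
  P_nonneg : ∀ s a s', 0 ≤ P s a s'
  P_sum_one : ∀ s a, ∑ s', P s a s' = 1

variable {S A : Type} [Fintype S] [Nonempty S] [Fintype A] [Nonempty A]

/-- The transition operator `P^π` induced by a deterministic policy `π`. -/
def Pop (M : FinMDP S A) (p : S → A) (V : S → ℝ) : S → ℝ :=
  fun s => ∑ s', M.P s (p s) s' * V s'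

/-- The reward vector `r^π` induced by a deterministic policy `π`. -/
def rPol (M : FinMDP S A) (p : S → A) : S → ℝ := fun s => M.r s (p s)

/-- The Bellman optimality operator `T`. -/
def bellman (M : FinMDP S A) (V : S → ℝ) : S → ℝ :=
  fun s => Finset.univ.sup' Finset.univ_nonempty
    (fun a => M.r s a + ∑ s', M.P s a s' * V s')

/-- A deterministic policy `π` is greedy for `V` if `r^π + P^π V = T V`. -/
def IsGreedy (M : FinMDP S A) (p : S → A) (V : S → ℝ) : Prop :=
  rPol M p + Pop M p V = bellman M V

/-- `(g, h)` is a solution of the modified Bellman equations: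
`max_π P^π g = g`, `max_π (r^π + P^π h) = h + g` (entrywise maxima over
deterministic policies, equivalently over actions), and some deterministic
policy attains both maxima simultaneously. -/
def IsMBESolution (M : FinMDP S A) (g h : S → ℝ) : Prop :=
  (∀ s, (Finset.univ.sup' Finset.univ_nonempty
      fun a => ∑ s', M.P s a s' * g s') = g s) ∧
  (∀ s, bellman M h s = h s + g s) ∧
  (∃ p : S → A, Pop M p g = g ∧ rPol M p + Pop M p h = h + g)

/-- The average reward `g^π(s) = liminf_{T→∞} (1/T) ∑_{t<T} ((P^π)^t r^π)(s)`. -/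
def avgReward (M : FinMDP S A) (p : S → A) : S → ℝ :=
  fun s => Filter.liminf
    (fun T : ℕ => (1 / (T : ℝ)) * ∑ t ∈ Finset.range T, ((Pop M p)^[t] (rPol M p)) s)
    Filter.atTop

set_option linter.unusedSectionVars false

-- pi norm helpers
lemma pi_norm_le {x : S → ℝ} {c : ℝ} (hc : 0 ≤ c) (h : ∀ s, |x s| ≤ c) : ‖x‖ ≤ c := by
  rw [pi_norm_le_iff_of_nonneg hc]
  simpa [Real.norm_eq_abs] using h

lemma apply_le_norm (x : S → ℝ) (s : S) : |x s| ≤ ‖x‖ := by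
  simpa [Real.norm_eq_abs] using norm_le_pi_norm x s

-- weighted average bound
lemma Pop_apply_abs_le (M : FinMDP S A) (p : S → A) (x : S → ℝ) (s : S) :
    |Pop M p x s| ≤ ‖x‖ := by
  have h1 : |Pop M p x s| ≤ ∑ s', M.P s (p s) s' * ‖x‖ := by
    refine (Finset.abs_sum_le_sum_abs _ _).trans ?_
    refine Finset.sum_le_sum fun s' _ => ?_
    rw [abs_mul, abs_of_nonneg (M.P_nonneg s (p s) s')]
    exact mul_le_mul_of_nonneg_left ((apply_le_norm x s')) (M.P_nonneg s (p s) s')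
  simpa [← Finset.sum_mul, M.P_sum_one s (p s)] using h1

lemma sum_P_sub (M : FinMDP S A) (s : S) (a : A) (x y : S → ℝ) :
    ∑ s', M.P s a s' * x s' - ∑ s', M.P s a s' * y s' = ∑ s', M.P s a s' * (x s' - y s') := by
  rw [← Finset.sum_sub_distrib]
  exact Finset.sum_congr rfl fun s' _ => by ring

lemma sum_P_le (M : FinMDP S A) (s : S) (a : A) (z : S → ℝ) :
    ∑ s', M.P s a s' * z s' ≤ ‖z‖ := by
  calc ∑ s', M.P s a s' * z s' ≤ ∑ s', M.P s a s' * ‖z‖ := by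
        refine Finset.sum_le_sum fun s' _ => mul_le_mul_of_nonneg_left ?_ (M.P_nonneg s a s')
        exact (le_abs_self _).trans (apply_le_norm z s')
    _ = ‖z‖ := by rw [← Finset.sum_mul, M.P_sum_one s a, one_mul]

lemma bellman_apply_sub_le (M : FinMDP S A) (x y : S → ℝ) (s : S) :
    bellman M x s ≤ bellman M y s + ‖x - y‖ := by
  unfold bellman
  refine Finset.sup'_le _ _ fun a _ => ?_
  have h2 : M.r s a + ∑ s', M.P s a s' * x s' ≤
      (M.r s a + ∑ s', M.P s a s' * y s') + ‖x - y‖ := by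
    have h3 := sum_P_le M s a (x - y)
    simp only [Pi.sub_apply] at h3
    rw [← sum_P_sub] at h3
    linarith
  refine h2.trans (add_le_add ?_ le_rfl)
  exact Finset.le_sup' (fun a => M.r s a + ∑ s', M.P s a s' * y s') (Finset.mem_univ a)

lemma bellman_dist (M : FinMDP S A) (x y : S → ℝ) (s : S) :
    |bellman M x s - bellman M y s| ≤ ‖x - y‖ := by
  rw [abs_le]
  constructor
  · have := bellman_apply_sub_le M y x s
    have hxy : ‖y - x‖ = ‖x - y‖ := norm_sub_rev y x
    linarith [hxy ▸ this]
  · linarith [bellman_apply_sub_le M x y s]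

lemma bellman_nonexpansive (M : FinMDP S A) (x y : S → ℝ) :
    ‖bellman M x - bellman M y‖ ≤ ‖x - y‖ :=
  pi_norm_le (norm_nonneg _) fun s => by
    simpa using bellman_dist M x y s

lemma bellman_add_const (M : FinMDP S A) (x : S → ℝ) (d : ℝ) :
    bellman M (x + fun _ : S => d) = bellman M x + fun _ : S => d := by
  funext s
  unfold bellman
  have h1 : ∀ a : A, M.r s a + ∑ s', M.P s a s' * (x + fun _ : S => d) s'
      = (M.r s a + ∑ s', M.P s a s' * x s') + d := by
    intro a
    have h0 : ∑ s', M.P s a s' * (x s' + d) = (∑ s', M.P s a s' * x s') + d := by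
      rw [Finset.sum_congr rfl fun s' _ => mul_add (M.P s a s') (x s') d,
        Finset.sum_add_distrib, ← Finset.sum_mul, M.P_sum_one s a, one_mul]
    simp only [Pi.add_apply]
    rw [h0]; ring
  simp only [Pi.add_apply]
  rw [Finset.sup'_add]
  refine Finset.sup'_congr _ rfl fun a _ => ?_
  rw [Finset.sum_congr rfl fun s' _ => mul_add (M.P s a s') (x s') d,
    Finset.sum_add_distrib, ← Finset.sum_mul, M.P_sum_one s a]
  ring



/-- Anchored iteration `a_{k+1} = (2/(k+3)) a_0 + (1 - 2/(k+3)) F(a_k)`. -/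
def ancSeq (F : (S → ℝ) → (S → ℝ)) (y0 : S → ℝ) : ℕ → S → ℝ
  | 0 => y0
  | (k + 1) => (2 / ((k : ℝ) + 3)) • y0 + (1 - 2 / ((k : ℝ) + 3)) • F (ancSeq F y0 k)

section Anc

variable {F : (S → ℝ) → (S → ℝ)} {h y0 : S → ℝ}

lemma lam_pos (k : ℕ) : (0:ℝ) < 2 / ((k : ℝ) + 3) := by positivity

lemma lam_le_one (k : ℕ) : 2 / ((k : ℝ) + 3) ≤ 1 := by
  rw [div_le_one (by positivity)]
  have : (0:ℝ) ≤ (k:ℝ) := Nat.cast_nonneg k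
  linarith

lemma anc_bound (hF : ∀ x y, ‖F x - F y‖ ≤ ‖x - y‖) (hfix : F h = h) :
    ∀ k, ‖ancSeq F y0 k - h‖ ≤ ‖y0 - h‖ := by
  intro k
  induction k with
  | zero => simp [ancSeq]
  | succ k ih =>
    have key : ancSeq F y0 (k+1) - h
        = (2 / ((k : ℝ) + 3)) • (y0 - h) + (1 - 2 / ((k : ℝ) + 3)) • (F (ancSeq F y0 k) - h) := by
      show (2 / ((k : ℝ) + 3)) • y0 + (1 - 2 / ((k : ℝ) + 3)) • F (ancSeq F y0 k) - h = _
      funext s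
      simp only [Pi.add_apply, Pi.sub_apply, Pi.smul_apply, smul_eq_mul]
      ring
    rw [key]
    have hFk : ‖F (ancSeq F y0 k) - h‖ ≤ ‖y0 - h‖ := by
      have h6 := hF (ancSeq F y0 k) h
      rw [hfix] at h6
      exact le_trans h6 ih
    calc ‖(2 / ((k : ℝ) + 3)) • (y0 - h) + (1 - 2 / ((k : ℝ) + 3)) • (F (ancSeq F y0 k) - h)‖
        ≤ ‖(2 / ((k : ℝ) + 3)) • (y0 - h)‖ + ‖(1 - 2 / ((k : ℝ) + 3)) • (F (ancSeq F y0 k) - h)‖ :=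
          norm_add_le _ _
      _ = (2 / ((k : ℝ) + 3)) * ‖y0 - h‖ + (1 - 2 / ((k : ℝ) + 3)) * ‖F (ancSeq F y0 k) - h‖ := by
          rw [norm_smul, norm_smul, Real.norm_eq_abs, Real.norm_eq_abs,
            abs_of_pos (lam_pos k), abs_of_nonneg (by linarith [lam_le_one k])]
      _ ≤ (2 / ((k : ℝ) + 3)) * ‖y0 - h‖ + (1 - 2 / ((k : ℝ) + 3)) * ‖y0 - h‖ := by
          have := lam_le_one k
          nlinarith [norm_nonneg (y0 - h)]
      _ = ‖y0 - h‖ := by ring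

lemma anc_F_dist (hF : ∀ x y, ‖F x - F y‖ ≤ ‖x - y‖) (hfix : F h = h) (k : ℕ) :
    ‖y0 - F (ancSeq F y0 k)‖ ≤ 2 * ‖y0 - h‖ := by
  have h1 : ‖F (ancSeq F y0 k) - h‖ ≤ ‖y0 - h‖ := by
    have h6 := hF (ancSeq F y0 k) h
    rw [hfix] at h6
    exact le_trans h6 (anc_bound hF hfix k)
  calc ‖y0 - F (ancSeq F y0 k)‖ ≤ ‖y0 - h‖ + ‖h - F (ancSeq F y0 k)‖ :=
        norm_sub_le_norm_sub_add_norm_sub _ _ _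
    _ ≤ 2 * ‖y0 - h‖ := by rw [norm_sub_rev h]; linarith


lemma anc_diff (hF : ∀ x y, ‖F x - F y‖ ≤ ‖x - y‖) (hfix : F h = h) :
    ∀ k, ‖ancSeq F y0 (k+1) - ancSeq F y0 k‖ ≤ 4 * ‖y0 - h‖ / ((k : ℝ) + 3) := by
  intro k
  induction k with
  | zero =>
    have key : ancSeq F y0 1 - ancSeq F y0 0 = (1/3 : ℝ) • (F y0 - y0) := by
      funext s
      simp only [ancSeq, Pi.add_apply, Pi.sub_apply, Pi.smul_apply, smul_eq_mul]
      push_cast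
      ring
    rw [key, norm_smul]
    have h2 : ‖F y0 - y0‖ ≤ 2 * ‖y0 - h‖ := by
      have h3 := anc_F_dist (y0 := y0) hF hfix 0
      rw [norm_sub_rev]
      simpa [ancSeq] using h3
    rw [Real.norm_eq_abs, abs_of_pos (by norm_num : (0:ℝ) < 1/3)]
    push_cast
    norm_num
    linarith [norm_nonneg (y0 - h)]
  | succ k ih =>
    have key : ancSeq F y0 (k+2) - ancSeq F y0 (k+1)
        = (2 / ((k:ℝ) + 3) - 2 / ((k:ℝ) + 4)) • (F (ancSeq F y0 k) - y0)
          + (1 - 2 / ((k:ℝ) + 4)) • (F (ancSeq F y0 (k+1)) - F (ancSeq F y0 k)) := by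
      funext s
      simp only [ancSeq, Pi.add_apply, Pi.sub_apply, Pi.smul_apply, smul_eq_mul]
      push_cast
      ring
    rw [key]
    have hD0 : (0:ℝ) ≤ ‖y0 - h‖ := norm_nonneg _
    have hk3 : (0:ℝ) < (k:ℝ) + 3 := by positivity
    have hk4 : (0:ℝ) < (k:ℝ) + 4 := by positivity
    have hcoef : (0:ℝ) ≤ 2 / ((k:ℝ) + 3) - 2 / ((k:ℝ) + 4) := by
      rw [sub_nonneg, div_le_div_iff₀ hk4 hk3]
      linarith
    have h5 : 2 / ((k:ℝ) + 4) ≤ 1 := by rw [div_le_one hk4]; linarith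
    have hFd : ‖F (ancSeq F y0 (k+1)) - F (ancSeq F y0 k)‖ ≤ 4 * ‖y0 - h‖ / ((k : ℝ) + 3) :=
      le_trans (hF _ _) ih
    have hyF : ‖F (ancSeq F y0 k) - y0‖ ≤ 2 * ‖y0 - h‖ := by
      rw [norm_sub_rev]; exact anc_F_dist hF hfix k
    have step1 : ‖(2 / ((k:ℝ) + 3) - 2 / ((k:ℝ) + 4)) • (F (ancSeq F y0 k) - y0)
          + (1 - 2 / ((k:ℝ) + 4)) • (F (ancSeq F y0 (k+1)) - F (ancSeq F y0 k))‖
        ≤ (2 / ((k:ℝ) + 3) - 2 / ((k:ℝ) + 4)) * ‖F (ancSeq F y0 k) - y0‖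
          + (1 - 2 / ((k:ℝ) + 4)) * ‖F (ancSeq F y0 (k+1)) - F (ancSeq F y0 k)‖ := by
      refine le_trans (norm_add_le _ _) ?_
      rw [norm_smul, norm_smul, Real.norm_eq_abs, Real.norm_eq_abs,
        abs_of_nonneg hcoef, abs_of_nonneg (by linarith)]
    refine le_trans step1 ?_
    have goal_eq : (2 / ((k:ℝ) + 3) - 2 / ((k:ℝ) + 4)) * (2 * ‖y0 - h‖)
        + (1 - 2 / ((k:ℝ) + 4)) * (4 * ‖y0 - h‖ / ((k : ℝ) + 3))
        = 4 * ‖y0 - h‖ / (((k:ℕ)+1 : ℝ) + 3) := by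
      push_cast
      field_simp
      ring
    have mono1 : (2 / ((k:ℝ) + 3) - 2 / ((k:ℝ) + 4)) * ‖F (ancSeq F y0 k) - y0‖
        ≤ (2 / ((k:ℝ) + 3) - 2 / ((k:ℝ) + 4)) * (2 * ‖y0 - h‖) :=
      mul_le_mul_of_nonneg_left hyF hcoef
    have mono2 : (1 - 2 / ((k:ℝ) + 4)) * ‖F (ancSeq F y0 (k+1)) - F (ancSeq F y0 k)‖
        ≤ (1 - 2 / ((k:ℝ) + 4)) * (4 * ‖y0 - h‖ / ((k : ℝ) + 3)) :=
      mul_le_mul_of_nonneg_left hFd (by linarith)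
    have := add_le_add mono1 mono2
    rw [goal_eq] at this
    exact le_trans this (le_of_eq (by push_cast; ring))

lemma anc_residual (hF : ∀ x y, ‖F x - F y‖ ≤ ‖x - y‖) (hfix : F h = h) :
    ∀ k, ‖F (ancSeq F y0 k) - ancSeq F y0 k‖ ≤ 8 * ‖y0 - h‖ / ((k : ℝ) + 1) := by
  intro k
  have hD0 : (0:ℝ) ≤ ‖y0 - h‖ := norm_nonneg _
  match k with
  | 0 =>
    have h2 : ‖F y0 - y0‖ ≤ 2 * ‖y0 - h‖ := by
      have h3 := anc_F_dist (y0 := y0) hF hfix 0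
      rw [norm_sub_rev]
      simpa [ancSeq] using h3
    simp only [ancSeq]
    push_cast
    norm_num
    linarith
  | (k+1) =>
    have key : F (ancSeq F y0 (k+1)) - ancSeq F y0 (k+1)
        = (2 / ((k:ℝ) + 3)) • (F (ancSeq F y0 (k+1)) - y0)
          + (1 - 2 / ((k:ℝ) + 3)) • (F (ancSeq F y0 (k+1)) - F (ancSeq F y0 k)) := by
      funext s
      simp only [ancSeq, Pi.add_apply, Pi.sub_apply, Pi.smul_apply, smul_eq_mul]
      ring
    rw [key]
    have hk3 : (0:ℝ) < (k:ℝ) + 3 := by positivity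
    have h5 : 2 / ((k:ℝ) + 3) ≤ 1 := lam_le_one k
    have hyF : ‖F (ancSeq F y0 (k+1)) - y0‖ ≤ 2 * ‖y0 - h‖ := by
      rw [norm_sub_rev]
      exact anc_F_dist hF hfix (k+1)
    have hFd : ‖F (ancSeq F y0 (k+1)) - F (ancSeq F y0 k)‖ ≤ 4 * ‖y0 - h‖ / ((k : ℝ) + 3) :=
      le_trans (hF _ _) (anc_diff hF hfix k)
    have step1 : ‖(2 / ((k:ℝ) + 3)) • (F (ancSeq F y0 (k+1)) - y0)
          + (1 - 2 / ((k:ℝ) + 3)) • (F (ancSeq F y0 (k+1)) - F (ancSeq F y0 k))‖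
        ≤ (2 / ((k:ℝ) + 3)) * ‖F (ancSeq F y0 (k+1)) - y0‖
          + (1 - 2 / ((k:ℝ) + 3)) * ‖F (ancSeq F y0 (k+1)) - F (ancSeq F y0 k)‖ := by
      refine le_trans (norm_add_le _ _) ?_
      rw [norm_smul, norm_smul, Real.norm_eq_abs, Real.norm_eq_abs,
        abs_of_pos (lam_pos k), abs_of_nonneg (by linarith)]
    refine le_trans step1 ?_
    have mono1 : (2 / ((k:ℝ) + 3)) * ‖F (ancSeq F y0 (k+1)) - y0‖
        ≤ (2 / ((k:ℝ) + 3)) * (2 * ‖y0 - h‖) :=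
      mul_le_mul_of_nonneg_left hyF (le_of_lt (lam_pos k))
    have mono2 : (1 - 2 / ((k:ℝ) + 3)) * ‖F (ancSeq F y0 (k+1)) - F (ancSeq F y0 k)‖
        ≤ (1 - 2 / ((k:ℝ) + 3)) * (4 * ‖y0 - h‖ / ((k : ℝ) + 3)) :=
      mul_le_mul_of_nonneg_left hFd (by linarith)
    have hsum := add_le_add mono1 mono2
    refine le_trans hsum ?_
    have expand : (2 / ((k:ℝ) + 3)) * (2 * ‖y0 - h‖)
        + (1 - 2 / ((k:ℝ) + 3)) * (4 * ‖y0 - h‖ / ((k : ℝ) + 3))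
        = 8 * ‖y0 - h‖ * ((k:ℝ) + 2) / (((k:ℝ) + 3)^2) := by
      field_simp
      ring
    rw [expand]
    have hcast : (((k+1:ℕ)):ℝ) + 1 = (k:ℝ) + 2 := by push_cast; ring
    rw [hcast, div_le_div_iff₀ (by positivity) (by positivity)]
    nlinarith [hD0]

end Anc

section Avg

lemma real_le_of_forall_pos {a b : ℝ} (h : ∀ η : ℝ, 0 < η → a ≤ b + η) : a ≤ b := by
  by_contra hc
  push_neg at hc
  have := h ((a - b)/2) (by linarith)
  linarith

variable (M : FinMDP S A) (p : S → A)

lemma Pop_add (x y : S → ℝ) : Pop M p (x + y) = Pop M p x + Pop M p y := by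
  funext s
  simp only [Pop, Pi.add_apply]
  rw [← Finset.sum_add_distrib]
  exact Finset.sum_congr rfl fun s' _ => by ring

lemma Pop_sub (x y : S → ℝ) : Pop M p (x - y) = Pop M p x - Pop M p y := by
  funext s
  simp only [Pop, Pi.sub_apply]
  rw [← Finset.sum_sub_distrib]
  exact Finset.sum_congr rfl fun s' _ => by ring

lemma Pop_const (d : ℝ) : Pop M p (fun _ : S => d) = fun _ : S => d := by
  funext s
  simp only [Pop]
  rw [← Finset.sum_mul, M.P_sum_one s (p s), one_mul]

lemma Pop_iter_add (t : ℕ) (x y : S → ℝ) :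
    (Pop M p)^[t] (x + y) = (Pop M p)^[t] x + (Pop M p)^[t] y := by
  induction t with
  | zero => simp
  | succ t ih => rw [Function.iterate_succ_apply', Function.iterate_succ_apply',
      Function.iterate_succ_apply', ih, Pop_add]

lemma Pop_iter_sub (t : ℕ) (x y : S → ℝ) :
    (Pop M p)^[t] (x - y) = (Pop M p)^[t] x - (Pop M p)^[t] y := by
  induction t with
  | zero => simp
  | succ t ih => rw [Function.iterate_succ_apply', Function.iterate_succ_apply',
      Function.iterate_succ_apply', ih, Pop_sub]

lemma Pop_iter_const (t : ℕ) (d : ℝ) :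
    (Pop M p)^[t] (fun _ : S => d) = fun _ : S => d := by
  induction t with
  | zero => simp
  | succ t ih => rw [Function.iterate_succ_apply', ih, Pop_const]

lemma Pop_iter_norm_le (t : ℕ) (x : S → ℝ) : ‖(Pop M p)^[t] x‖ ≤ ‖x‖ := by
  induction t with
  | zero => simp
  | succ t ih =>
    rw [Function.iterate_succ_apply']
    refine le_trans (pi_norm_le (norm_nonneg _) fun s => ?_) ih
    exact Pop_apply_abs_le M p _ s

lemma Pop_iter_abs_le (t : ℕ) (x : S → ℝ) (s : S) : |(Pop M p)^[t] x s| ≤ ‖x‖ :=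
  le_trans (apply_le_norm _ s) (Pop_iter_norm_le M p t x)

lemma avg_close (V : S → ℝ) (c : ℝ) (hgreedy : IsGreedy M p V) :
    ‖(fun _ : S => c) - avgReward M p‖ ≤ ‖bellman M V - V - fun _ : S => c‖ := by
  set ε : S → ℝ := bellman M V - V - (fun _ : S => c) with hε
  have hε0 : (0:ℝ) ≤ ‖ε‖ := norm_nonneg _
  refine pi_norm_le hε0 fun s => ?_
  -- decomposition of the reward
  have hr : rPol M p = (V - Pop M p V) + ((fun _ : S => c) + ε) := by
    funext s'
    have hgs := congrFun hgreedy s'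
    simp only [Pi.add_apply, Pi.sub_apply, hε] at hgs ⊢
    linarith
  -- pointwise formula for the partial sums
  have hterm : ∀ t : ℕ, (Pop M p)^[t] (rPol M p) s
      = ((Pop M p)^[t] V s - (Pop M p)^[t+1] V s) + (c + (Pop M p)^[t] ε s) := by
    intro t
    rw [hr, Pop_iter_add, Pop_iter_add, Pop_iter_sub, Pop_iter_const]
    simp only [Pi.add_apply, Pi.sub_apply]
    rw [Function.iterate_succ_apply]
  -- the average-reward sequence
  set u : ℕ → ℝ := fun T => (1 / (T : ℝ)) * ∑ t ∈ Finset.range T, ((Pop M p)^[t] (rPol M p)) s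
    with hu
  have havg : avgReward M p s = Filter.liminf u Filter.atTop := rfl
  have hbound : ∀ T : ℕ, 1 ≤ T → |u T - c| ≤ ‖ε‖ + 2 * ‖V‖ / T := by
    intro T hT
    have hTpos : (0:ℝ) < (T:ℝ) := by exact_mod_cast hT
    have hsum : ∑ t ∈ Finset.range T, ((Pop M p)^[t] (rPol M p)) s
        = (V s - (Pop M p)^[T] V s) + ((T : ℝ) * c + ∑ t ∈ Finset.range T, (Pop M p)^[t] ε s) := by
      rw [Finset.sum_congr rfl fun t _ => hterm t, Finset.sum_add_distrib,
        Finset.sum_range_sub' (fun t => (Pop M p)^[t] V s), Finset.sum_add_distrib]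
      simp [Function.iterate_zero_apply]
    have hUc : u T - c = (1 / (T:ℝ)) * ((V s - (Pop M p)^[T] V s)
        + ∑ t ∈ Finset.range T, (Pop M p)^[t] ε s) := by
      rw [hu]
      simp only []
      rw [hsum]
      field_simp
      ring
    rw [hUc, abs_mul, abs_of_pos (by positivity : (0:ℝ) < 1 / (T:ℝ))]
    have habs1 : |V s - (Pop M p)^[T] V s| ≤ 2 * ‖V‖ := by
      have h1 := apply_le_norm V s
      have h2 := Pop_iter_abs_le M p T V s
      calc |V s - (Pop M p)^[T] V s| ≤ |V s| + |(Pop M p)^[T] V s| := abs_sub _ _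
        _ ≤ 2 * ‖V‖ := by linarith
    have habs2 : |∑ t ∈ Finset.range T, (Pop M p)^[t] ε s| ≤ (T:ℝ) * ‖ε‖ := by
      refine le_trans (Finset.abs_sum_le_sum_abs _ _) ?_
      calc ∑ t ∈ Finset.range T, |(Pop M p)^[t] ε s|
          ≤ ∑ _t ∈ Finset.range T, ‖ε‖ :=
            Finset.sum_le_sum fun t _ => Pop_iter_abs_le M p t ε s
        _ = (T:ℝ) * ‖ε‖ := by rw [Finset.sum_const, Finset.card_range]; push_cast; ring
    calc (1 / (T:ℝ)) * |(V s - (Pop M p)^[T] V s) + ∑ t ∈ Finset.range T, (Pop M p)^[t] ε s|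
        ≤ (1 / (T:ℝ)) * (2 * ‖V‖ + (T:ℝ) * ‖ε‖) := by
          refine mul_le_mul_of_nonneg_left ?_ (by positivity)
          exact le_trans (abs_add_le _ _) (by linarith)
      _ = ‖ε‖ + 2 * ‖V‖ / (T:ℝ) := by field_simp; ring
  -- boundedness facts
  have hVnn : (0:ℝ) ≤ ‖V‖ := norm_nonneg _
  have hub : ∀ᶠ T in (Filter.atTop : Filter ℕ), u T ≤ c + (‖ε‖ + 2 * ‖V‖) := by
    filter_upwards [Filter.eventually_ge_atTop 1] with T hT
    have h1 := hbound T hT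
    have hTpos : (1:ℝ) ≤ (T:ℝ) := by exact_mod_cast hT
    have h2 : 2 * ‖V‖ / (T:ℝ) ≤ 2 * ‖V‖ := by
      rw [div_le_iff₀ (by linarith)]
      nlinarith
    rw [abs_le] at h1
    linarith [h1.2]
  have hlb : ∀ᶠ T in (Filter.atTop : Filter ℕ), c - (‖ε‖ + 2 * ‖V‖) ≤ u T := by
    filter_upwards [Filter.eventually_ge_atTop 1] with T hT
    have h1 := hbound T hT
    have hTpos : (1:ℝ) ≤ (T:ℝ) := by exact_mod_cast hT
    have h2 : 2 * ‖V‖ / (T:ℝ) ≤ 2 * ‖V‖ := by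
      rw [div_le_iff₀ (by linarith)]
      nlinarith
    rw [abs_le] at h1
    linarith [h1.1]
  have hbdd_ge : Filter.IsBoundedUnder (· ≥ ·) Filter.atTop u :=
    Filter.isBoundedUnder_of_eventually_ge hlb
  have hbdd_le : Filter.IsBoundedUnder (· ≤ ·) Filter.atTop u :=
    Filter.isBoundedUnder_of_eventually_le hub
  have hcob : Filter.IsCoboundedUnder (· ≥ ·) Filter.atTop u :=
    hbdd_le.isCoboundedUnder_ge
  have htnd : Filter.Tendsto (fun T : ℕ => 2 * ‖V‖ / (T:ℝ)) Filter.atTop (nhds 0) := by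
    have := tendsto_one_div_atTop_nhds_zero_nat.const_mul (2 * ‖V‖)
    simpa [div_eq_mul_inv, mul_assoc, one_div] using this
  -- upper bound on the liminf
  have hL_ub : Filter.liminf u Filter.atTop ≤ c + ‖ε‖ := by
    refine real_le_of_forall_pos fun η hη => ?_
    have hev : ∀ᶠ T in (Filter.atTop : Filter ℕ), u T ≤ c + ‖ε‖ + η := by
      filter_upwards [Filter.eventually_ge_atTop 1, htnd.eventually_lt_const hη] with T hT h2
      have h1 := hbound T hT
      rw [abs_le] at h1
      linarith [h1.2]
    have := Filter.liminf_le_of_frequently_le hev.frequently hbdd_ge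
    linarith
  -- lower bound on the liminf
  have hL_lb : c - ‖ε‖ ≤ Filter.liminf u Filter.atTop := by
    have key : ∀ η : ℝ, 0 < η → c - ‖ε‖ ≤ Filter.liminf u Filter.atTop + η := by
      intro η hη
      have hev : ∀ᶠ T in (Filter.atTop : Filter ℕ), c - ‖ε‖ - η ≤ u T := by
        filter_upwards [Filter.eventually_ge_atTop 1, htnd.eventually_lt_const hη] with T hT h2
        have h1 := hbound T hT
        rw [abs_le] at h1
        linarith [h1.1]
      have := Filter.le_liminf_of_le hcob hev
      linarith
    exact real_le_of_forall_pos key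
  -- conclude
  have : |c - Filter.liminf u Filter.atTop| ≤ ‖ε‖ := by
    rw [abs_le]
    constructor <;> linarith
  simpa [havg] using this

end Avg

section MBE

lemma isMBE_of_bellman_eq (M : FinMDP S A) (c : ℝ) (x : S → ℝ)
    (hx : ∀ s, bellman M x s = x s + c) :
    IsMBESolution M (fun _ : S => c) x := by
  have hsum_const : ∀ (s : S) (a : A), ∑ s', M.P s a s' * c = c := fun s a => by
    rw [← Finset.sum_mul, M.P_sum_one s a, one_mul]
  refine ⟨fun s => ?_, fun s => hx s, ?_⟩
  · rw [Finset.sup'_congr Finset.univ_nonempty rfl fun a _ => hsum_const s a]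
    exact Finset.sup'_const Finset.univ_nonempty c
  · choose p hp using fun s : S =>
      Finset.exists_mem_eq_sup' (Finset.univ_nonempty (α := A))
        (fun a => M.r s a + ∑ s', M.P s a s' * x s')
    refine ⟨p, ?_, ?_⟩
    · funext s
      exact hsum_const s (p s)
    · funext s
      have hps := (hp s).2
      show rPol M p s + Pop M p x s = x s + c
      rw [← hx s]
      show M.r s (p s) + ∑ s', M.P s (p s) s' * x s' = bellman M x s
      exact hps.symm

end MBE

/-- Theorem (Anc-RVI with λ_k = 2/(k+2), MDP whose optimal average reward is
constant): `O(1/k)` rate on Bellman and policy errors; moreover, if the `h`-part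
of solutions of the modified Bellman equations is unique up to additive constant
vectors (as in unichain MDPs), the iterates `h^k` and `f(h^k)·1` converge. -/
theorem ancrvi_rate_and_convergence
    (M : FinMDP S A) (g h : S → ℝ) (hsol : IsMBESolution M g h)
    (hconst : ∃ c : ℝ, g = fun _ => c)
    (f : (S → ℝ) → ℝ) (hf : Continuous f)
    (hf1 : ∀ x : S → ℝ, ∀ d : ℝ, f (x + fun _ : S => d) = f x + d)
    (hs : ℕ → S → ℝ) (pol : ℕ → S → A)
    (hit : ∀ k : ℕ, hs (k + 1) =
      (2 / ((k : ℝ) + 3)) • hs 0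
        + (1 - 2 / ((k : ℝ) + 3)) • (bellman M (hs k) - fun _ : S => f (hs k)))
    (hpol : ∀ k : ℕ, IsGreedy M (pol k) (hs k)) :
    (∀ k : ℕ, 1 ≤ k →
      ‖g - avgReward M (pol k)‖ ≤ ‖bellman M (hs k) - hs k - g‖ ∧
      ‖bellman M (hs k) - hs k - g‖ ≤ 8 / ((k : ℝ) + 1) * ‖hs 0 - h‖) ∧
    ((∀ h1 h2 : S → ℝ, IsMBESolution M g h1 → IsMBESolution M g h2 →
        ∃ d : ℝ, h2 = h1 + fun _ : S => d) →
      ∃ hinf : S → ℝ, Filter.Tendsto hs Filter.atTop (nhds hinf) ∧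
        IsMBESolution M g hinf ∧
        Filter.Tendsto (fun k : ℕ => (fun _ : S => f (hs k))) Filter.atTop (nhds g)) := by
  classical
  obtain ⟨c, rfl⟩ := hconst
  -- the shifted Bellman operator with fixed point `h`
  set Tt : (S → ℝ) → (S → ℝ) := fun x => bellman M x - fun _ : S => c with hTt
  have hTtapp : ∀ x (s : S), Tt x s = bellman M x s - c := fun x s => rfl
  have hTtne : ∀ x y, ‖Tt x - Tt y‖ ≤ ‖x - y‖ := by
    intro x y
    have hxy : Tt x - Tt y = bellman M x - bellman M y := by
      funext s
      simp only [hTt, Pi.sub_apply]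
      ring
    rw [hxy]
    exact bellman_nonexpansive M x y
  have hTtfix : Tt h = h := by
    funext s
    have hb := hsol.2.1 s
    simp only [hTtapp]
    simp only [hb]
    ring
  have hTtshift : ∀ (x : S → ℝ) (d : ℝ), Tt (x + fun _ : S => d) = Tt x + fun _ : S => d := by
    intro x d
    funext s
    have hb := congrFun (bellman_add_const M x d) s
    simp only [hTtapp, Pi.add_apply] at hb ⊢
    rw [hb]
    ring
  set y : ℕ → S → ℝ := ancSeq Tt (hs 0) with hy
  set D : ℝ := ‖hs 0 - h‖ with hD
  have hD0 : 0 ≤ D := norm_nonneg _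
  have hy0 : y 0 = hs 0 := rfl
  have hyrec : ∀ k, y (k+1) = (2 / ((k : ℝ) + 3)) • hs 0 + (1 - 2 / ((k : ℝ) + 3)) • Tt (y k) :=
    fun k => rfl
  have hyD : ∀ k, ‖y k - h‖ ≤ D := fun k => anc_bound hTtne hTtfix k
  have hres : ∀ k, ‖Tt (y k) - y k‖ ≤ 8 * D / ((k : ℝ) + 1) := fun k =>
    anc_residual hTtne hTtfix k
  -- the iterates agree with the anchored sequence up to constant shifts
  have hshift : ∀ k, ∃ d : ℝ, hs k = y k + fun _ : S => d := by
    intro k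
    induction k with
    | zero => exact ⟨0, by funext s; simp [hy0]⟩
    | succ k ih =>
      obtain ⟨d, hd⟩ := ih
      refine ⟨(1 - 2 / ((k : ℝ) + 3)) * (c - f (y k)), ?_⟩
      rw [hit k, hd, bellman_add_const M (y k) d, hf1 (y k) d, hyrec k]
      funext s
      simp only [Pi.add_apply, Pi.sub_apply, Pi.smul_apply, smul_eq_mul, hTtapp]
      ring
  -- the Bellman residual is invariant under the shift
  have hres_eq : ∀ k, bellman M (hs k) - hs k - (fun _ : S => c) = Tt (y k) - y k := by
    intro k
    obtain ⟨d, hd⟩ := hshift k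
    rw [hd, bellman_add_const M (y k) d]
    funext s
    simp only [Pi.add_apply, Pi.sub_apply, hTtapp]
    ring
  constructor
  · -- Part 1: rates
    intro k hk
    have hk1 : (0:ℝ) < (k : ℝ) + 1 := by positivity
    constructor
    · exact avg_close M (pol k) (hs k) c (hpol k)
    · rw [hres_eq k]
      refine le_trans (hres k) (le_of_eq ?_)
      rw [div_mul_eq_mul_div]
  · -- Part 2: convergence
    intro huniq
    set s₀ : S := Classical.arbitrary S with hs₀
    set t : ℕ → ℝ := fun k => y k s₀ - h s₀ with ht
    set δ : ℕ → S → ℝ := fun k => y k - h - fun _ : S => t k with hδ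
    have hδapp : ∀ k (s : S), δ k s = y k s - h s - (y k s₀ - h s₀) := fun k s => rfl
    -- every limit point of `y` is a fixed point of `Tt`, hence `δ → 0`
    have hδ0 : Filter.Tendsto δ Filter.atTop (nhds 0) := by
      by_contra hcon
      rw [Metric.tendsto_atTop] at hcon
      push_neg at hcon
      obtain ⟨ε, hε, hfreq⟩ := hcon
      have hfreq' : ∃ᶠ k in Filter.atTop, ε ≤ dist (δ k) 0 := by
        rw [Filter.frequently_atTop]
        intro N
        obtain ⟨k, hk1, hk2⟩ := hfreq N
        exact ⟨k, hk1, hk2⟩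
      obtain ⟨φ, hφmono, hφ⟩ := extraction_of_frequently_atTop hfreq'
      have hmem : ∀ n, y (φ n) ∈ Metric.closedBall h D := by
        intro n
        rw [Metric.mem_closedBall, dist_eq_norm]
        exact hyD (φ n)
      obtain ⟨z, -, ψ, hψmono, hψ⟩ :=
        tendsto_subseq_of_bounded (Metric.isBounded_closedBall (x := h) (r := D)) hmem
      set σ : ℕ → ℕ := fun j => φ (ψ j) with hσ
      have hσmono : StrictMono σ := hφmono.comp hψmono
      have hyσ : Filter.Tendsto (fun j => y (σ j)) Filter.atTop (nhds z) := hψ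
      have hynorm : Filter.Tendsto (fun j => ‖y (σ j) - z‖) Filter.atTop (nhds 0) := by
        rw [← tendsto_iff_norm_sub_tendsto_zero]
        exact hyσ
      have hσtop : Filter.Tendsto (fun j => ((σ j : ℝ) + 1)) Filter.atTop Filter.atTop := by
        refine Filter.tendsto_atTop_add_const_right _ 1 ?_
        exact tendsto_natCast_atTop_atTop.comp hσmono.tendsto_atTop
      have hrestend : Filter.Tendsto (fun j => 8 * D / ((σ j : ℝ) + 1)) Filter.atTop (nhds 0) :=
        Filter.Tendsto.div_atTop tendsto_const_nhds hσtop
      have hTtz : Tt z = z := by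
        have hb : ∀ j, ‖Tt z - z‖ ≤ 2 * ‖y (σ j) - z‖ + 8 * D / ((σ j : ℝ) + 1) := by
          intro j
          have h1 : ‖Tt z - z‖ ≤ ‖Tt z - Tt (y (σ j))‖ + ‖Tt (y (σ j)) - z‖ :=
            norm_sub_le_norm_sub_add_norm_sub _ _ _
          have h2 : ‖Tt (y (σ j)) - z‖ ≤ ‖Tt (y (σ j)) - y (σ j)‖ + ‖y (σ j) - z‖ :=
            norm_sub_le_norm_sub_add_norm_sub _ _ _
          have h3 : ‖Tt z - Tt (y (σ j))‖ ≤ ‖z - y (σ j)‖ := hTtne _ _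
          have h4 := hres (σ j)
          have h5 : ‖z - y (σ j)‖ = ‖y (σ j) - z‖ := norm_sub_rev _ _
          linarith
        have hlim : Filter.Tendsto (fun j => 2 * ‖y (σ j) - z‖ + 8 * D / ((σ j : ℝ) + 1))
            Filter.atTop (nhds 0) := by
          have := (hynorm.const_mul 2).add hrestend
          simpa using this
        have hle : ‖Tt z - z‖ ≤ 0 := ge_of_tendsto hlim (Filter.Eventually.of_forall hb)
        have : Tt z - z = 0 := by
          have := le_antisymm hle (norm_nonneg _)
          exact norm_eq_zero.mp this
        funext s
        have := congrFun this s
        simp only [Pi.sub_apply, Pi.zero_apply] at this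
        linarith
      -- `z` is the `h`-part of a solution, hence a constant shift of `h`
      have hbz : ∀ s, bellman M z s = z s + c := by
        intro s
        have := congrFun hTtz s
        simp only [hTtapp] at this
        linarith
      obtain ⟨d, hzd⟩ := huniq h z hsol (isMBE_of_bellman_eq M c z hbz)
      -- so `δ (σ j) → 0`, contradiction
      have hFcont : Continuous (fun v : S → ℝ => v - h - fun _ : S => v s₀ - h s₀) := by
        refine continuous_pi fun s => ?_
        simp only [Pi.sub_apply]
        exact ((continuous_apply s).sub continuous_const).sub
          ((continuous_apply s₀).sub continuous_const)
      have hδσ : Filter.Tendsto (fun j => δ (σ j)) Filter.atTop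
          (nhds (z - h - fun _ : S => z s₀ - h s₀)) :=
        (hFcont.tendsto z).comp hyσ
      have hz0 : z - h - (fun _ : S => z s₀ - h s₀) = 0 := by
        funext s
        have h1 := congrFun hzd s
        have h2 := congrFun hzd s₀
        simp only [Pi.add_apply, Pi.sub_apply, Pi.zero_apply] at h1 h2 ⊢
        rw [h1, h2]
        ring
      rw [hz0] at hδσ
      have hδnorm : Filter.Tendsto (fun j => ‖δ (σ j)‖) Filter.atTop (nhds 0) := by
        have := hδσ.norm
        simpa using this
      have hcontra : ε ≤ (0:ℝ) := by
        refine ge_of_tendsto hδnorm (Filter.Eventually.of_forall fun j => ?_)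
        have := hφ (ψ j)
        rwa [dist_zero_right] at this
      linarith
    -- assemble the limit
    set hinf : S → ℝ := h + fun _ : S => c - f h with hinf_def
    have hδnorm0 : Filter.Tendsto (fun k => ‖δ k‖) Filter.atTop (nhds 0) := by
      have := hδ0.norm
      simpa using this
    -- auxiliary: η
    set η : ℕ → S → ℝ := fun k => Tt (y k) - h - fun _ : S => t k with hη
    have hηle : ∀ k, ‖η k‖ ≤ ‖δ k‖ := by
      intro k
      have h1 : η k = Tt (y k) - Tt (h + fun _ : S => t k) := by
        rw [hTtshift h (t k), hTtfix]
        funext s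
        simp only [hη, Pi.add_apply, Pi.sub_apply]
        ring
      have h2 : δ k = y k - (h + fun _ : S => t k) := by
        funext s
        simp only [hδ, Pi.add_apply, Pi.sub_apply]
        ring
      rw [h1, h2]
      exact hTtne _ _
    have hη0 : Filter.Tendsto η Filter.atTop (nhds 0) :=
      squeeze_zero_norm hηle hδnorm0
    -- the step identity
    have hstep : ∀ k, hs (k+1)
        = (2 / ((k : ℝ) + 3)) • hs 0 + (1 - 2 / ((k : ℝ) + 3)) • h
          + (1 - 2 / ((k : ℝ) + 3)) • η k
          + fun _ : S => (1 - 2 / ((k : ℝ) + 3)) * (c - f (h + δ k)) := by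
      intro k
      obtain ⟨d, hd⟩ := hshift k
      have hyk : y k = (h + δ k) + fun _ : S => t k := by
        funext s
        simp only [hδ, Pi.add_apply, Pi.sub_apply]
        ring
      rw [hit k, hd, bellman_add_const M (y k) d, hf1 (y k) d,
        show f (y k) = f (h + δ k) + t k by rw [hyk]; exact hf1 (h + δ k) (t k)]
      funext s
      have hby : bellman M (y k) s = h s + t k + η k s + c := by
        have hηs : η k s = Tt (y k) s - h s - t k := rfl
        have h1 : Tt (y k) s = bellman M (y k) s - c := rfl
        rw [hηs, h1]
        ring
      simp only [Pi.add_apply, Pi.sub_apply, Pi.smul_apply, smul_eq_mul]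
      rw [hby]
      ring
    -- limits of each piece
    have hlam0 : Filter.Tendsto (fun k : ℕ => 2 / ((k : ℝ) + 3)) Filter.atTop (nhds 0) := by
      refine Filter.Tendsto.div_atTop tendsto_const_nhds ?_
      exact Filter.tendsto_atTop_add_const_right _ 3 tendsto_natCast_atTop_atTop
    have hlam1 : Filter.Tendsto (fun k : ℕ => 1 - 2 / ((k : ℝ) + 3)) Filter.atTop (nhds 1) := by
      have := (tendsto_const_nhds (x := (1:ℝ)) (f := (Filter.atTop : Filter ℕ))).sub hlam0
      simpa using this
    have hT1 : Filter.Tendsto (fun k : ℕ => (2 / ((k : ℝ) + 3)) • hs 0) Filter.atTop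
        (nhds (0 : S → ℝ)) := by
      have := hlam0.smul_const (hs 0)
      simpa using this
    have hT2 : Filter.Tendsto (fun k : ℕ => (1 - 2 / ((k : ℝ) + 3)) • h) Filter.atTop (nhds h) := by
      have := hlam1.smul_const h
      simpa using this
    have hT3 : Filter.Tendsto (fun k : ℕ => (1 - 2 / ((k : ℝ) + 3)) • η k) Filter.atTop
        (nhds (0 : S → ℝ)) := by
      have := hlam1.smul hη0
      simpa using this
    have hfδ : Filter.Tendsto (fun k : ℕ => f (h + δ k)) Filter.atTop (nhds (f h)) := by
      have hhd : Filter.Tendsto (fun k : ℕ => h + δ k) Filter.atTop (nhds h) := by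
        have := (tendsto_const_nhds (x := h) (f := (Filter.atTop : Filter ℕ))).add hδ0
        simpa using this
      exact (hf.tendsto h).comp hhd
    have hsc : Filter.Tendsto (fun k : ℕ => (1 - 2 / ((k : ℝ) + 3)) * (c - f (h + δ k)))
        Filter.atTop (nhds (c - f h)) := by
      have := hlam1.mul ((tendsto_const_nhds (x := c) (f := (Filter.atTop : Filter ℕ))).sub hfδ)
      simpa using this
    have hT4 : Filter.Tendsto
        (fun k : ℕ => (fun _ : S => (1 - 2 / ((k : ℝ) + 3)) * (c - f (h + δ k)) : S → ℝ))
        Filter.atTop (nhds (fun _ : S => c - f h)) := by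
      rw [tendsto_pi_nhds]
      intro s
      exact hsc
    have hsum : Filter.Tendsto (fun k : ℕ =>
        (2 / ((k : ℝ) + 3)) • hs 0 + (1 - 2 / ((k : ℝ) + 3)) • h
          + (1 - 2 / ((k : ℝ) + 3)) • η k
          + fun _ : S => (1 - 2 / ((k : ℝ) + 3)) * (c - f (h + δ k)))
        Filter.atTop (nhds hinf) := by
      have := ((hT1.add hT2).add hT3).add hT4
      have heq : (0 : S → ℝ) + h + 0 + (fun _ : S => c - f h) = hinf := by
        funext s
        simp [hinf_def]
      rwa [heq] at this
    have hmain : Filter.Tendsto hs Filter.atTop (nhds hinf) := by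
      have h1 : Filter.Tendsto (fun k : ℕ => hs (k + 1)) Filter.atTop (nhds hinf) :=
        hsum.congr fun k => (hstep k).symm
      exact (Filter.tendsto_add_atTop_iff_nat 1).mp h1
    have hbinf : ∀ s, bellman M hinf s = hinf s + c := by
      intro s
      have hb := congrFun (bellman_add_const M h (c - f h)) s
      have hbh := hsol.2.1 s
      simp only [hinf_def, Pi.add_apply] at hb ⊢
      rw [hb]
      simp only [hbh]
      ring
    refine ⟨hinf, hmain, isMBE_of_bellman_eq M c hinf hbinf, ?_⟩
    have hfh : Filter.Tendsto (fun k : ℕ => f (hs k)) Filter.atTop (nhds c) := by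
      have h1 : Filter.Tendsto (fun k : ℕ => f (hs k)) Filter.atTop (nhds (f hinf)) :=
        (hf.tendsto hinf).comp hmain
      have h2 : f hinf = c := by
        have := hf1 h (c - f h)
        simp only [hinf_def]
        rw [this]
        ring
      rwa [h2] at h1
    rw [tendsto_pi_nhds]
    intro s
    exact hfh
end
end

section
/- Consider a finite MDP and let (g⋆, h⋆) be a solution of the modified Bellman equations. Run Anc-VI with coefficients λ_k ∈ [0,1) (convention λ_0 = 1) and starting point V^0. Then for every k ≥ 1, ‖ (V^k − V^0) / (∑_{i=1}^k ∏_{j=i}^k (1−λ_j)) − g⋆ ‖_∞ ≤ ( 2(1−λ_k) / ∑_{i=1}^k ∏_{j=i}^k (1−λ_j) ) · ‖V^0 − h⋆‖_∞. -/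
open Finset Filter

noncomputable section

variable {S A : Type} [Fintype S] [Nonempty S] [Fintype A] [Nonempty A]

-- sum splitting
lemma sum_split (M : FinMDP S A) (s : S) (a : A) (h g : S → ℝ) (c : ℝ) :
    ∑ s', M.P s a s' * (h + c • g) s'
      = (∑ s', M.P s a s' * h s') + c * ∑ s', M.P s a s' * g s' := by
  rw [Finset.mul_sum, ← Finset.sum_add_distrib]
  exact Finset.sum_congr rfl fun s' _ => by
    simp only [Pi.add_apply, Pi.smul_apply, smul_eq_mul]; ring

lemma bellman_le (M : FinMDP S A) (V W : S → ℝ) (s : S) :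
    bellman M V s ≤ bellman M W s + ‖V - W‖ := by
  apply Finset.sup'_le
  intro a _
  have h1 : ∑ s', M.P s a s' * V s' ≤ (∑ s', M.P s a s' * W s') + ‖V - W‖ := by
    have h2 : ∑ s', (M.P s a s' * V s' - M.P s a s' * W s') ≤ ‖V - W‖ := by
      calc ∑ s', (M.P s a s' * V s' - M.P s a s' * W s')
          ≤ ∑ s', M.P s a s' * ‖V - W‖ := by
            apply Finset.sum_le_sum
            intro s' _
            rw [← mul_sub]
            apply mul_le_mul_of_nonneg_left _ (M.P_nonneg s a s')
            calc V s' - W s' ≤ |V s' - W s'| := le_abs_self _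
              _ = ‖(V - W) s'‖ := by simp [Real.norm_eq_abs]
              _ ≤ ‖V - W‖ := norm_le_pi_norm _ s'
        _ = ‖V - W‖ := by rw [← Finset.sum_mul, M.P_sum_one, one_mul]
    rw [Finset.sum_sub_distrib] at h2
    linarith
  calc M.r s a + ∑ s', M.P s a s' * V s'
      ≤ (M.r s a + ∑ s', M.P s a s' * W s') + ‖V - W‖ := by linarith
    _ ≤ bellman M W s + ‖V - W‖ :=
        add_le_add_left
          (Finset.le_sup' (fun a => M.r s a + ∑ s', M.P s a s' * W s')
            (Finset.mem_univ a)) _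

lemma bellman_nonexp (M : FinMDP S A) (V W : S → ℝ) :
    ‖bellman M V - bellman M W‖ ≤ ‖V - W‖ := by
  rw [pi_norm_le_iff_of_nonneg (norm_nonneg _)]
  intro s
  rw [Pi.sub_apply, Real.norm_eq_abs, abs_le]
  constructor
  · have := bellman_le M W V s
    rw [norm_sub_rev] at this
    linarith
  · have := bellman_le M V W s
    linarith

lemma bellman_shift (M : FinMDP S A) {g h : S → ℝ} (hsol : IsMBESolution M g h)
    {c : ℝ} (hc : 0 ≤ c) :
    bellman M (h + c • g) = h + g + c • g := by
  obtain ⟨hg, hTh, p, hpg, hph⟩ := hsol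
  funext s
  apply le_antisymm
  · apply Finset.sup'_le
    intro a _
    have h2 : M.r s a + (∑ s', M.P s a s' * h s') ≤ h s + g s := by
      rw [← hTh s]
      exact Finset.le_sup' (fun a => M.r s a + ∑ s', M.P s a s' * h s')
        (Finset.mem_univ a)
    have h3 : ∑ s', M.P s a s' * g s' ≤ g s := by
      rw [← hg s]
      exact Finset.le_sup' (fun a => ∑ s', M.P s a s' * g s') (Finset.mem_univ a)
    have h4 := mul_le_mul_of_nonneg_left h3 hc
    rw [sum_split]
    simp only [Pi.add_apply, Pi.smul_apply, smul_eq_mul]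
    linarith
  · have e1 := congrFun hpg s
    have e2 := congrFun hph s
    simp only [Pop, rPol, Pi.add_apply] at e1 e2
    refine le_trans ?_
      (Finset.le_sup' (fun a => M.r s a + ∑ s', M.P s a s' * (h + c • g) s')
        (Finset.mem_univ (p s)))
    rw [sum_split, e1]
    simp only [Pi.add_apply, Pi.smul_apply, smul_eq_mul]
    linarith

def Nc (lam : ℕ → ℝ) (k : ℕ) : ℝ :=
  ∑ i ∈ Finset.Icc 1 k, ∏ j ∈ Finset.Icc i k, (1 - lam j)

lemma Nc_zero (lam : ℕ → ℝ) : Nc lam 0 = 0 := by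
  simp [Nc, Finset.Icc_eq_empty (by omega : ¬ (1:ℕ) ≤ 0)]

lemma Nc_succ (lam : ℕ → ℝ) (k : ℕ) :
    Nc lam (k + 1) = (1 - lam (k + 1)) * (Nc lam k + 1) := by
  unfold Nc
  rw [Finset.sum_Icc_succ_top (by omega : 1 ≤ k + 1)]
  rw [Finset.Icc_self, Finset.prod_singleton]
  rw [Finset.sum_congr rfl fun i hi =>
    Finset.prod_Icc_succ_top (by have := (Finset.mem_Icc.mp hi).2; omega) _]
  rw [← Finset.sum_mul]
  ring

lemma Nc_nonneg (lam : ℕ → ℝ) (hlam : ∀ j : ℕ, 1 ≤ j → lam j ∈ Set.Ico (0 : ℝ) 1)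
    (k : ℕ) : 0 ≤ Nc lam k := by
  apply Finset.sum_nonneg
  intro i hi
  apply Finset.prod_nonneg
  intro j hj
  have hj1 : 1 ≤ j := le_trans (Finset.mem_Icc.mp hi).1 (Finset.mem_Icc.mp hj).1
  have := (hlam j hj1).2
  linarith


/-- Theorem (Anc-VI, normalized iterates, general multichain MDP): rate of the
normalized iterates toward the optimal average reward `g⋆`. -/
theorem ancvi_normalized_rate
    (M : FinMDP S A) (g h : S → ℝ) (hsol : IsMBESolution M g h)
    (lam : ℕ → ℝ) (hlam0 : lam 0 = 1)
    (hlam : ∀ j : ℕ, 1 ≤ j → lam j ∈ Set.Ico (0 : ℝ) 1)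
    (V : ℕ → S → ℝ)
    (hV : ∀ k : ℕ, V (k + 1) = lam (k + 1) • V 0 + (1 - lam (k + 1)) • bellman M (V k)) :
    ∀ k : ℕ, 1 ≤ k →
      ‖(∑ i ∈ Finset.Icc 1 k, ∏ j ∈ Finset.Icc i k, (1 - lam j))⁻¹ • (V k - V 0) - g‖ ≤
        2 * (1 - lam k) / (∑ i ∈ Finset.Icc 1 k, ∏ j ∈ Finset.Icc i k, (1 - lam j))
          * ‖V 0 - h‖ := by
  -- the coupled bound: distance to the reference trajectory h + Nc • g stays ≤ ‖V 0 - h‖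
  have hD : ∀ n : ℕ, ‖V n - (h + Nc lam n • g)‖ ≤ ‖V 0 - h‖ := by
    intro n
    induction n with
    | zero => simp [Nc_zero]
    | succ n ih =>
      have hln := hlam (n + 1) (by omega)
      have hl0 : (0:ℝ) ≤ lam (n + 1) := hln.1
      have hl1 : lam (n + 1) < 1 := hln.2
      have hshift : bellman M (h + Nc lam n • g) = h + g + Nc lam n • g :=
        bellman_shift M hsol (Nc_nonneg lam hlam n)
      have key : V (n + 1) - (h + Nc lam (n + 1) • g)
          = lam (n + 1) • (V 0 - h)
            + (1 - lam (n + 1)) • (bellman M (V n) - bellman M (h + Nc lam n • g)) := by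
        rw [hV n, hshift, Nc_succ]
        module
      rw [key]
      have hbne : ‖bellman M (V n) - bellman M (h + Nc lam n • g)‖ ≤ ‖V 0 - h‖ :=
        le_trans (bellman_nonexp M _ _) ih
      calc ‖lam (n + 1) • (V 0 - h)
            + (1 - lam (n + 1)) • (bellman M (V n) - bellman M (h + Nc lam n • g))‖
          ≤ ‖lam (n + 1) • (V 0 - h)‖
            + ‖(1 - lam (n + 1)) • (bellman M (V n) - bellman M (h + Nc lam n • g))‖ :=
            norm_add_le _ _
        _ = lam (n + 1) * ‖V 0 - h‖
            + (1 - lam (n + 1)) * ‖bellman M (V n) - bellman M (h + Nc lam n • g)‖ := by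
            rw [norm_smul, norm_smul, Real.norm_eq_abs, Real.norm_eq_abs,
              abs_of_nonneg hl0, abs_of_nonneg (by linarith)]
        _ ≤ lam (n + 1) * ‖V 0 - h‖ + (1 - lam (n + 1)) * ‖V 0 - h‖ := by nlinarith
        _ = ‖V 0 - h‖ := by ring
  intro k hk
  obtain ⟨m, rfl⟩ : ∃ m, k = m + 1 := ⟨k - 1, by omega⟩
  show ‖(Nc lam (m + 1))⁻¹ • (V (m + 1) - V 0) - g‖ ≤
      2 * (1 - lam (m + 1)) / Nc lam (m + 1) * ‖V 0 - h‖
  have hln := hlam (m + 1) (by omega)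
  have hNpos : 0 < Nc lam (m + 1) := by
    rw [Nc_succ]
    have := Nc_nonneg lam hlam m
    nlinarith [hln.2]
  have key : V (m + 1) - V 0 - Nc lam (m + 1) • g
      = (1 - lam (m + 1)) •
        ((bellman M (V m) - bellman M (h + Nc lam m • g)) - (V 0 - h)) := by
    rw [hV m, bellman_shift M hsol (Nc_nonneg lam hlam m), Nc_succ]
    module
  have hnorm : ‖V (m + 1) - V 0 - Nc lam (m + 1) • g‖
      ≤ 2 * (1 - lam (m + 1)) * ‖V 0 - h‖ := by
    rw [key, norm_smul, Real.norm_eq_abs, abs_of_nonneg (by linarith [hln.2])]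
    have h1 : ‖(bellman M (V m) - bellman M (h + Nc lam m • g)) - (V 0 - h)‖
        ≤ 2 * ‖V 0 - h‖ := by
      calc ‖(bellman M (V m) - bellman M (h + Nc lam m • g)) - (V 0 - h)‖
          ≤ ‖bellman M (V m) - bellman M (h + Nc lam m • g)‖ + ‖V 0 - h‖ :=
            norm_sub_le _ _
        _ ≤ ‖V 0 - h‖ + ‖V 0 - h‖ :=
            add_le_add_left (le_trans (bellman_nonexp M _ _) (hD m)) _
        _ = 2 * ‖V 0 - h‖ := by ring
    nlinarith [hln.2]
  have e : (Nc lam (m + 1))⁻¹ • (V (m + 1) - V 0) - g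
      = (Nc lam (m + 1))⁻¹ • (V (m + 1) - V 0 - Nc lam (m + 1) • g) := by
    conv_rhs => rw [smul_sub, smul_smul, inv_mul_cancel₀ hNpos.ne', one_smul]
  rw [e, norm_smul, Real.norm_eq_abs, abs_of_nonneg (inv_nonneg.mpr hNpos.le)]
  calc (Nc lam (m + 1))⁻¹ * ‖V (m + 1) - V 0 - Nc lam (m + 1) • g‖
      ≤ (Nc lam (m + 1))⁻¹ * (2 * (1 - lam (m + 1)) * ‖V 0 - h‖) :=
        mul_le_mul_of_nonneg_left hnorm (inv_nonneg.mpr hNpos.le)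
    _ = 2 * (1 - lam (m + 1)) / Nc lam (m + 1) * ‖V 0 - h‖ := by
        field_simp
end
end
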